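/- arXiv:2512.11233 — 2 statements merged into one kernel-verified Lean document; each statement's English description precedes it below -/
import Mathlib

section
/- For the binary joint distribution p(a,b,λ) with strictly positive entries and fixed a,λ, the mutual information I(X:Y) is a convex function of b; specifically, ∂²I/∂b² = 1/(b²−1) + (1/16)Σ_{x,y} 1/p_{xy} ≥ 0 whenever −1 < b < 1 and all entries are positive. -/
noncomputable section

def p00 (a b lam : ℝ) : ℝ := (1 + a + b + lam) / 4
def p01 (a b lam : ℝ) : ℝ := (1 + a - b - lam) / 4
def p10 (a b lam : ℝ) : ℝ := (1 - a + b - lam) / 4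
def p11 (a b lam : ℝ) : ℝ := (1 - a - b + lam) / 4

def pX0 (a : ℝ) : ℝ := (1 + a) / 2
def pX1 (a : ℝ) : ℝ := (1 - a) / 2
def pY0 (b : ℝ) : ℝ := (1 + b) / 2
def pY1 (b : ℝ) : ℝ := (1 - b) / 2

/-- Mutual information of the binary joint distribution `p(a,b,λ)` (natural log). -/
def MI (a b lam : ℝ) : ℝ :=
    p00 a b lam * Real.log (p00 a b lam / (pX0 a * pY0 b))
  + p01 a b lam * Real.log (p01 a b lam / (pX0 a * pY1 b))
  + p10 a b lam * Real.log (p10 a b lam / (pX1 a * pY0 b))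
  + p11 a b lam * Real.log (p11 a b lam / (pX1 a * pY1 b))

/-!
Expanding the logarithms gives `I = H(X) + H(Y) - H(X,Y)` with `H` built from
`negMulLog x = -x log x`. In `b`, `H(X)` is constant and every other probability is affine with
slope `±1/4` (joint) or `±1/2` (marginal of `Y`); since `negMulLog'' x = -1/x`, the second
derivative is `(1/16) Σ 1/p_xy - (1/4) (1/p_{Y=0} + 1/p_{Y=1})`, and the marginal part equals
`1/(b² - 1)`. Convexity is `4/(x + y) ≤ 1/x + 1/y` applied to `p_{Y=y} = p_{0y} + p_{1y}`.
-/

open Real Filter Topology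

def HasSecondDerivAt (f : ℝ → ℝ) (f'' x : ℝ) : Prop :=
  ∃ f' : ℝ → ℝ, (∀ᶠ y in 𝓝 x, HasDerivAt f (f' y) y) ∧ HasDerivAt f' f'' x

namespace HasSecondDerivAt

variable {f g : ℝ → ℝ} {f'' g'' x : ℝ}

theorem deriv_deriv (hf : HasSecondDerivAt f f'' x) : deriv (deriv f) x = f'' := by
  obtain ⟨f', hf', hf''⟩ := hf
  have hderiv : deriv f =ᶠ[𝓝 x] f' := hf'.mono fun y hy => hy.deriv
  rw [hderiv.deriv_eq, hf''.deriv]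

theorem congr_of_eventuallyEq (hf : HasSecondDerivAt f f'' x) (h : g =ᶠ[𝓝 x] f) :
    HasSecondDerivAt g f'' x := by
  obtain ⟨f', hf', hf''⟩ := hf
  refine ⟨f', ?_, hf''⟩
  filter_upwards [hf', h.eventuallyEq_nhds] with y hy hgy
  exact hy.congr_of_eventuallyEq hgy

theorem add (hf : HasSecondDerivAt f f'' x) (hg : HasSecondDerivAt g g'' x) :
    HasSecondDerivAt (fun y => f y + g y) (f'' + g'') x := by
  obtain ⟨f', hf', hf''⟩ := hf
  obtain ⟨g', hg', hg''⟩ := hg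
  refine ⟨fun y => f' y + g' y, ?_, hf''.add hg''⟩
  filter_upwards [hf', hg'] with y hfy hgy
  exact hfy.add hgy

theorem sub (hf : HasSecondDerivAt f f'' x) (hg : HasSecondDerivAt g g'' x) :
    HasSecondDerivAt (fun y => f y - g y) (f'' - g'') x := by
  obtain ⟨f', hf', hf''⟩ := hf
  obtain ⟨g', hg', hg''⟩ := hg
  refine ⟨fun y => f' y - g' y, ?_, hf''.sub hg''⟩
  filter_upwards [hf', hg'] with y hfy hgy
  exact hfy.sub hgy

theorem const_add (hf : HasSecondDerivAt f f'' x) (c : ℝ) :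
    HasSecondDerivAt (fun y => c + f y) f'' x := by
  obtain ⟨f', hf', hf''⟩ := hf
  exact ⟨f', hf'.mono fun y hy => hy.const_add c, hf''⟩

theorem congr_deriv (hf : HasSecondDerivAt f f'' x) (h : f'' = g'') : HasSecondDerivAt f g'' x :=
  h ▸ hf

end HasSecondDerivAt

theorem hasSecondDerivAt_negMulLog_comp {g : ℝ → ℝ} {c x : ℝ} (hg : ∀ y, HasDerivAt g c y)
    (hx : 0 < g x) : HasSecondDerivAt (fun y => negMulLog (g y)) (-(c ^ 2 / g x)) x := by
  refine ⟨fun y => c * (-log (g y) - 1), ?_, ?_⟩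
  · filter_upwards [(hg x).continuousAt.eventually (lt_mem_nhds hx)] with y hy
    exact ((hasDerivAt_negMulLog hy.ne').comp y (hg y)).congr_deriv (mul_comm _ _)
  · exact ((((hg x).log hx.ne').neg.sub_const 1).const_mul c).congr_deriv (by ring)

theorem mutualInfo_two_by_two_eq_entropy {p q r s : ℝ} (hp : 0 < p) (hq : 0 < q) (hr : 0 < r)
    (hs : 0 < s) :
    p * log (p / ((p + q) * (p + r))) + q * log (q / ((p + q) * (q + s)))
      + r * log (r / ((r + s) * (p + r))) + s * log (s / ((r + s) * (q + s)))
      = negMulLog (p + q) + negMulLog (r + s) + (negMulLog (p + r) + negMulLog (q + s))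
        - (negMulLog p + negMulLog q + negMulLog r + negMulLog s) := by
  have hpq := add_pos hp hq
  have hrs := add_pos hr hs
  have hpr := add_pos hp hr
  have hqs := add_pos hq hs
  simp only [negMulLog]
  rw [log_div hp.ne' (by positivity), log_div hq.ne' (by positivity),
    log_div hr.ne' (by positivity), log_div hs.ne' (by positivity),
    log_mul hpq.ne' hpr.ne', log_mul hpq.ne' hqs.ne', log_mul hrs.ne' hpr.ne',
    log_mul hrs.ne' hqs.ne']
  ring

theorem four_div_add_le_one_div_add_one_div {x y : ℝ} (hx : 0 < x) (hy : 0 < y) :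
    4 / (x + y) ≤ 1 / x + 1 / y := by
  rw [div_add_div _ _ hx.ne' hy.ne', div_le_div_iff₀ (by positivity) (by positivity)]
  nlinarith [sq_nonneg (x - y)]

section BinaryDistribution

theorem pX0_eq (a b lam : ℝ) : pX0 a = p00 a b lam + p01 a b lam := by unfold pX0 p00 p01; ring
theorem pX1_eq (a b lam : ℝ) : pX1 a = p10 a b lam + p11 a b lam := by unfold pX1 p10 p11; ring
theorem pY0_eq (a b lam : ℝ) : pY0 b = p00 a b lam + p10 a b lam := by unfold pY0 p00 p10; ring
theorem pY1_eq (a b lam : ℝ) : pY1 b = p01 a b lam + p11 a b lam := by unfold pY1 p01 p11; ring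

variable {a b lam : ℝ}

theorem pY0_pos (h00 : 0 < p00 a b lam) (h10 : 0 < p10 a b lam) : 0 < pY0 b :=
  pY0_eq a b lam ▸ add_pos h00 h10

theorem pY1_pos (h01 : 0 < p01 a b lam) (h11 : 0 < p11 a b lam) : 0 < pY1 b :=
  pY1_eq a b lam ▸ add_pos h01 h11

theorem one_div_pY0_add_one_div_pY1 (h0 : pY0 b ≠ 0) (h1 : pY1 b ≠ 0) :
    1 / pY0 b + 1 / pY1 b = -4 / (b ^ 2 - 1) := by
  unfold pY0 pY1 at *
  have hp : 1 + b ≠ 0 := by simpa using h0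
  have hm : 1 - b ≠ 0 := by simpa using h1
  have : b ^ 2 - 1 ≠ 0 := by
    rw [show b ^ 2 - 1 = -((1 + b) * (1 - b)) by ring]
    exact neg_ne_zero.2 (mul_ne_zero hp hm)
  field_simp
  ring

theorem hasDerivAt_p00 : HasDerivAt (fun t => p00 a t lam) (1 / 4) b :=
  (((hasDerivAt_id b).const_add (1 + a)).add_const lam).div_const 4

theorem hasDerivAt_p01 : HasDerivAt (fun t => p01 a t lam) (-(1 / 4)) b :=
  ((((hasDerivAt_id b).const_sub (1 + a)).sub_const lam).div_const 4).congr_deriv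
    (neg_div _ _)

theorem hasDerivAt_p10 : HasDerivAt (fun t => p10 a t lam) (1 / 4) b :=
  (((hasDerivAt_id b).const_add (1 - a)).sub_const lam).div_const 4

theorem hasDerivAt_p11 : HasDerivAt (fun t => p11 a t lam) (-(1 / 4)) b :=
  ((((hasDerivAt_id b).const_sub (1 - a)).add_const lam).div_const 4).congr_deriv
    (neg_div _ _)

theorem hasDerivAt_pY0 : HasDerivAt pY0 (1 / 2) b :=
  ((hasDerivAt_id b).const_add 1).div_const 2

theorem hasDerivAt_pY1 : HasDerivAt pY1 (-(1 / 2)) b :=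
  (((hasDerivAt_id b).const_sub 1).div_const 2).congr_deriv (neg_div _ _)

theorem MI_eq_entropy (h00 : 0 < p00 a b lam) (h01 : 0 < p01 a b lam)
    (h10 : 0 < p10 a b lam) (h11 : 0 < p11 a b lam) :
    MI a b lam = negMulLog (pX0 a) + negMulLog (pX1 a) + (negMulLog (pY0 b) + negMulLog (pY1 b))
      - (negMulLog (p00 a b lam) + negMulLog (p01 a b lam)
        + negMulLog (p10 a b lam) + negMulLog (p11 a b lam)) := by
  rw [MI, pX0_eq a b lam, pX1_eq a b lam, pY0_eq a b lam, pY1_eq a b lam]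
  exact mutualInfo_two_by_two_eq_entropy h00 h01 h10 h11

theorem hasSecondDerivAt_MI (h00 : 0 < p00 a b lam) (h01 : 0 < p01 a b lam)
    (h10 : 0 < p10 a b lam) (h11 : 0 < p11 a b lam) :
    HasSecondDerivAt (fun t => MI a t lam)
      ((1 / 16) * (1 / p00 a b lam + 1 / p01 a b lam + 1 / p10 a b lam + 1 / p11 a b lam)
        - (1 / 4) * (1 / pY0 b + 1 / pY1 b)) b := by
  have hY := ((hasSecondDerivAt_negMulLog_comp (fun _ => hasDerivAt_pY0) (pY0_pos h00 h10)).add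
    (hasSecondDerivAt_negMulLog_comp (fun _ => hasDerivAt_pY1) (pY1_pos h01 h11)))
  have hXY := ((hasSecondDerivAt_negMulLog_comp (fun _ => hasDerivAt_p00) h00).add
    (hasSecondDerivAt_negMulLog_comp (fun _ => hasDerivAt_p01) h01)).add
    (hasSecondDerivAt_negMulLog_comp (fun _ => hasDerivAt_p10) h10) |>.add
    (hasSecondDerivAt_negMulLog_comp (fun _ => hasDerivAt_p11) h11)
  have hpos : ∀ᶠ t in 𝓝 b,
      0 < p00 a t lam ∧ 0 < p01 a t lam ∧ 0 < p10 a t lam ∧ 0 < p11 a t lam :=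
    (hasDerivAt_p00.continuousAt.eventually (lt_mem_nhds h00)).and <|
    (hasDerivAt_p01.continuousAt.eventually (lt_mem_nhds h01)).and <|
    (hasDerivAt_p10.continuousAt.eventually (lt_mem_nhds h10)).and
    (hasDerivAt_p11.continuousAt.eventually (lt_mem_nhds h11))
  have hMI := (hY.const_add (negMulLog (pX0 a) + negMulLog (pX1 a))).sub hXY
  refine (hMI.congr_of_eventuallyEq ?_).congr_deriv (by ring)
  filter_upwards [hpos] with t ⟨ht00, ht01, ht10, ht11⟩
  exact MI_eq_entropy ht00 ht01 ht10 ht11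

end BinaryDistribution

theorem MI_second_deriv_b_general (a b lam : ℝ)
    (h00 : 0 < p00 a b lam) (h01 : 0 < p01 a b lam)
    (h10 : 0 < p10 a b lam) (h11 : 0 < p11 a b lam) :
    deriv (deriv (fun t => MI a t lam)) b
      = 1 / (b ^ 2 - 1) + (1 / 16) * (1 / p00 a b lam + 1 / p01 a b lam
        + 1 / p10 a b lam + 1 / p11 a b lam) ∧
    0 ≤ deriv (deriv (fun t => MI a t lam)) b := by
  rw [(hasSecondDerivAt_MI h00 h01 h10 h11).deriv_deriv]
  constructor
  · rw [one_div_pY0_add_one_div_pY1 (pY0_pos h00 h10).ne' (pY1_pos h01 h11).ne']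
    ring
  · rw [pY0_eq a b lam, pY1_eq a b lam]
    have h0 := four_div_add_le_one_div_add_one_div h00 h10
    have h1 := four_div_add_le_one_div_add_one_div h01 h11
    linarith [mul_one_div 4 (p00 a b lam + p10 a b lam), mul_one_div 4 (p01 a b lam + p11 a b lam)]

theorem MI_second_deriv_b (a b lam : ℝ) (hb : -1 < b) (hb' : b < 1)
    (h00 : 0 < p00 a b lam) (h01 : 0 < p01 a b lam)
    (h10 : 0 < p10 a b lam) (h11 : 0 < p11 a b lam) :
    deriv (deriv (fun t => MI a t lam)) b
      = 1 / (b ^ 2 - 1) + (1 / 16) * (1 / p00 a b lam + 1 / p01 a b lam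
        + 1 / p10 a b lam + 1 / p11 a b lam) ∧
    0 ≤ deriv (deriv (fun t => MI a t lam)) b :=
  MI_second_deriv_b_general a b lam h00 h01 h10 h11
end
end

section
/- Fix a binary marginal p_X = ((1+a*)/2, (1−a*)/2) with a* ≥ 0, and a bound P with (1+a*)/2 ≤ P ≤ 1. Among all binary joint distributions p_{X,Y} with X-marginal p_X and guessing probability P_{X|Y} ≤ P, the mutual information I(X:Y) is maximized by p(a*, b*, λ*) with λ* = 2P − 1 and b* = λ* + a* − 1. -/
noncomputable section

/-! ### Auxiliary analytic lemmas -/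

lemma tangentL {u m : ℝ} (hu : 0 ≤ u) (hm : 0 < m) :
    u * Real.log m + u - m ≤ u * Real.log u := by
  rcases eq_or_lt_of_le hu with h | h
  · rw [← h]; simp; linarith
  · have h1 : Real.log (m / u) ≤ m / u - 1 := Real.log_le_sub_one_of_pos (by positivity)
    rw [Real.log_div (ne_of_gt hm) (ne_of_gt h)] at h1
    have h2 := mul_le_mul_of_nonneg_left h1 (le_of_lt h)
    have h3 : u * (m / u - 1) = m - u := by field_simp
    nlinarith [h2]

lemma logsum2 {a1 a2 b1 b2 : ℝ} (ha1 : 0 ≤ a1) (ha2 : 0 ≤ a2) (hb1 : 0 ≤ b1) (hb2 : 0 ≤ b2)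
    (h1 : b1 = 0 → a1 = 0) (h2 : b2 = 0 → a2 = 0) :
    (a1 + a2) * Real.log ((a1 + a2) / (b1 + b2)) ≤
      a1 * Real.log (a1 / b1) + a2 * Real.log (a2 / b2) := by
  rcases eq_or_lt_of_le hb1 with hb1' | hb1'
  · rw [h1 hb1'.symm, ← hb1']; simp
  rcases eq_or_lt_of_le hb2 with hb2' | hb2'
  · rw [h2 hb2'.symm, ← hb2']; simp
  have hSb : 0 < b1 + b2 := by linarith
  rcases eq_or_lt_of_le (add_nonneg ha1 ha2) with hSa | hSa
  · have e1 : a1 = 0 := by linarith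
    have e2 : a2 = 0 := by linarith
    simp [e1, e2]
  have key : ∀ p r : ℝ, 0 ≤ p → 0 < r →
      p * Real.log ((a1+a2)/(b1+b2)) + p - r * ((a1+a2)/(b1+b2)) ≤ p * Real.log (p / r) := by
    intro p r hp hr
    rcases eq_or_lt_of_le hp with hp' | hp'
    · rw [← hp']; simp; positivity
    · have t := tangentL (le_of_lt hp') (show 0 < r * ((a1+a2)/(b1+b2)) by positivity)
      rw [Real.log_mul (ne_of_gt hr) (by positivity)] at t
      rw [Real.log_div (ne_of_gt hp') (ne_of_gt hr)]
      nlinarith [t]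
  have k1 := key a1 b1 ha1 hb1'
  have k2 := key a2 b2 ha2 hb2'
  have hc : (b1 + b2) * ((a1+a2)/(b1+b2)) = a1 + a2 := by field_simp
  nlinarith [k1, k2]

lemma term_seg {t p1 p2 r1 r2 : ℝ} (ht : 0 < t) (ht1 : t < 1)
    (hp1 : 0 ≤ p1) (hp2 : 0 ≤ p2) (hr1 : 0 ≤ r1) (hr2 : 0 ≤ r2)
    (hz1 : r1 = 0 → p1 = 0) (hz2 : r2 = 0 → p2 = 0) :
    (t*p1+(1-t)*p2) * Real.log ((t*p1+(1-t)*p2) / (t*r1+(1-t)*r2)) ≤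
      t*(p1*Real.log (p1/r1)) + (1-t)*(p2*Real.log (p2/r2)) := by
  have h1t : (0:ℝ) < 1 - t := by linarith
  have key := logsum2 (a1 := t*p1) (a2 := (1-t)*p2) (b1 := t*r1) (b2 := (1-t)*r2)
    (by positivity) (by positivity) (by positivity) (by positivity)
    (fun h => by rcases mul_eq_zero.1 h with h' | h'
                 · exact absurd h' (ne_of_gt ht)
                 · rw [hz1 h', mul_zero])
    (fun h => by rcases mul_eq_zero.1 h with h' | h'
                 · exact absurd h' (ne_of_gt h1t)
                 · rw [hz2 h', mul_zero])
  rw [mul_div_mul_left p1 r1 (ne_of_gt ht), mul_div_mul_left p2 r2 (ne_of_gt h1t)] at key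
  nlinarith [key]

/-! ### Feasibility and marginals -/

def Feas (a b lam : ℝ) : Prop :=
  0 ≤ p00 a b lam ∧ 0 ≤ p01 a b lam ∧ 0 ≤ p10 a b lam ∧ 0 ≤ p11 a b lam

section helpers
variable {a b lam : ℝ}

lemma sumX0 : p00 a b lam + p01 a b lam = pX0 a := by
  simp only [p00, p01, pX0]; ring
lemma sumX1 : p10 a b lam + p11 a b lam = pX1 a := by
  simp only [p10, p11, pX1]; ring
lemma sumY0 : p00 a b lam + p10 a b lam = pY0 b := by
  simp only [p00, p10, pY0]; ring
lemma sumY1 : p01 a b lam + p11 a b lam = pY1 b := by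
  simp only [p01, p11, pY1]; ring

lemma pX0_nn (h : Feas a b lam) : 0 ≤ pX0 a := by
  obtain ⟨h1, h2, h3, h4⟩ := h; rw [← sumX0 (b := b) (lam := lam)]; linarith
lemma pX1_nn (h : Feas a b lam) : 0 ≤ pX1 a := by
  obtain ⟨h1, h2, h3, h4⟩ := h; rw [← sumX1 (b := b) (lam := lam)]; linarith
lemma pY0_nn (h : Feas a b lam) : 0 ≤ pY0 b := by
  obtain ⟨h1, h2, h3, h4⟩ := h; rw [← sumY0 (a := a) (lam := lam)]; linarith
lemma pY1_nn (h : Feas a b lam) : 0 ≤ pY1 b := by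
  obtain ⟨h1, h2, h3, h4⟩ := h; rw [← sumY1 (a := a) (lam := lam)]; linarith

lemma z00 (h : Feas a b lam) : pX0 a * pY0 b = 0 → p00 a b lam = 0 := by
  obtain ⟨h1, h2, h3, h4⟩ := h
  intro h; rcases mul_eq_zero.1 h with h | h
  · have := sumX0 (a := a) (b := b) (lam := lam); linarith
  · have := sumY0 (a := a) (b := b) (lam := lam); linarith
lemma z01 (h : Feas a b lam) : pX0 a * pY1 b = 0 → p01 a b lam = 0 := by
  obtain ⟨h1, h2, h3, h4⟩ := h
  intro h; rcases mul_eq_zero.1 h with h | h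
  · have := sumX0 (a := a) (b := b) (lam := lam); linarith
  · have := sumY1 (a := a) (b := b) (lam := lam); linarith
lemma z10 (h : Feas a b lam) : pX1 a * pY0 b = 0 → p10 a b lam = 0 := by
  obtain ⟨h1, h2, h3, h4⟩ := h
  intro h; rcases mul_eq_zero.1 h with h | h
  · have := sumX1 (a := a) (b := b) (lam := lam); linarith
  · have := sumY0 (a := a) (b := b) (lam := lam); linarith
lemma z11 (h : Feas a b lam) : pX1 a * pY1 b = 0 → p11 a b lam = 0 := by
  obtain ⟨h1, h2, h3, h4⟩ := h
  intro h; rcases mul_eq_zero.1 h with h | h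
  · have := sumX1 (a := a) (b := b) (lam := lam); linarith
  · have := sumY1 (a := a) (b := b) (lam := lam); linarith

end helpers

/-! ### Convexity of MI along segments -/

lemma seg {a t b1 l1 b2 l2 : ℝ} (ht0 : 0 ≤ t) (ht1 : t ≤ 1)
    (f1 : Feas a b1 l1) (f2 : Feas a b2 l2) :
    MI a (t*b1+(1-t)*b2) (t*l1+(1-t)*l2) ≤ t * MI a b1 l1 + (1-t) * MI a b2 l2 := by
  rcases eq_or_lt_of_le ht0 with h | htpos
  · rw [← h]; norm_num
  rcases eq_or_lt_of_le ht1 with h | ht1'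
  · rw [h]; norm_num
  have T00 := term_seg htpos ht1' f1.1 f2.1
    (mul_nonneg (pX0_nn f1) (pY0_nn f1)) (mul_nonneg (pX0_nn f2) (pY0_nn f2))
    (z00 f1) (z00 f2)
  have T01 := term_seg htpos ht1' f1.2.1 f2.2.1
    (mul_nonneg (pX0_nn f1) (pY1_nn f1)) (mul_nonneg (pX0_nn f2) (pY1_nn f2))
    (z01 f1) (z01 f2)
  have T10 := term_seg htpos ht1' f1.2.2.1 f2.2.2.1
    (mul_nonneg (pX1_nn f1) (pY0_nn f1)) (mul_nonneg (pX1_nn f2) (pY0_nn f2))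
    (z10 f1) (z10 f2)
  have T11 := term_seg htpos ht1' f1.2.2.2 f2.2.2.2
    (mul_nonneg (pX1_nn f1) (pY1_nn f1)) (mul_nonneg (pX1_nn f2) (pY1_nn f2))
    (z11 f1) (z11 f2)
  have e00 : t * p00 a b1 l1 + (1-t) * p00 a b2 l2
      = p00 a (t*b1+(1-t)*b2) (t*l1+(1-t)*l2) := by simp only [p00]; ring
  have e01 : t * p01 a b1 l1 + (1-t) * p01 a b2 l2
      = p01 a (t*b1+(1-t)*b2) (t*l1+(1-t)*l2) := by simp only [p01]; ring
  have e10 : t * p10 a b1 l1 + (1-t) * p10 a b2 l2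
      = p10 a (t*b1+(1-t)*b2) (t*l1+(1-t)*l2) := by simp only [p10]; ring
  have e11 : t * p11 a b1 l1 + (1-t) * p11 a b2 l2
      = p11 a (t*b1+(1-t)*b2) (t*l1+(1-t)*l2) := by simp only [p11]; ring
  have er0 : t * (pX0 a * pY0 b1) + (1-t) * (pX0 a * pY0 b2)
      = pX0 a * pY0 (t*b1+(1-t)*b2) := by simp only [pX0, pY0]; ring
  have er1 : t * (pX0 a * pY1 b1) + (1-t) * (pX0 a * pY1 b2)
      = pX0 a * pY1 (t*b1+(1-t)*b2) := by simp only [pX0, pY1]; ring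
  have er2 : t * (pX1 a * pY0 b1) + (1-t) * (pX1 a * pY0 b2)
      = pX1 a * pY0 (t*b1+(1-t)*b2) := by simp only [pX1, pY0]; ring
  have er3 : t * (pX1 a * pY1 b1) + (1-t) * (pX1 a * pY1 b2)
      = pX1 a * pY1 (t*b1+(1-t)*b2) := by simp only [pX1, pY1]; ring
  rw [e00, er0] at T00
  rw [e01, er1] at T01
  rw [e10, er2] at T10
  rw [e11, er3] at T11
  simp only [MI]
  linarith [T00, T01, T10, T11]

/-! ### Nonnegativity (Gibbs) -/

lemma gterm {p r : ℝ} (hp : 0 ≤ p) (hr : 0 ≤ r) (hz : r = 0 → p = 0) :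
    p - r ≤ p * Real.log (p / r) := by
  rcases eq_or_lt_of_le hr with h | hr'
  · rw [hz h.symm, ← h]; simp
  rcases eq_or_lt_of_le hp with h | hp'
  · rw [← h]; simp; linarith
  · have h1 : Real.log (r / p) ≤ r / p - 1 := Real.log_le_sub_one_of_pos (by positivity)
    have h2 : Real.log (p / r) = - Real.log (r / p) := by
      rw [← Real.log_inv]; congr 1; field_simp
    rw [h2]
    have h3 := mul_le_mul_of_nonneg_left h1 (le_of_lt hp')
    have h4 : p * (r / p - 1) = r - p := by field_simp
    nlinarith [h3]

lemma MI_nonneg {a b lam : ℝ} (f : Feas a b lam) : 0 ≤ MI a b lam := by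
  have g1 := gterm f.1 (mul_nonneg (pX0_nn f) (pY0_nn f)) (z00 f)
  have g2 := gterm f.2.1 (mul_nonneg (pX0_nn f) (pY1_nn f)) (z01 f)
  have g3 := gterm f.2.2.1 (mul_nonneg (pX1_nn f) (pY0_nn f)) (z10 f)
  have g4 := gterm f.2.2.2 (mul_nonneg (pX1_nn f) (pY1_nn f)) (z11 f)
  have hsum : (p00 a b lam - pX0 a * pY0 b) + (p01 a b lam - pX0 a * pY1 b)
      + (p10 a b lam - pX1 a * pY0 b) + (p11 a b lam - pX1 a * pY1 b) = 0 := by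
    simp only [p00, p01, p10, p11, pX0, pX1, pY0, pY1]; ring
  simp only [MI]; linarith

/-! ### Symmetry -/

lemma MI_neg (a b lam : ℝ) : MI a (-b) (-lam) = MI a b lam := by
  simp only [MI, p00, p01, p10, p11, pX0, pX1, pY0, pY1]
  ring_nf

/-! ### Vertices -/

lemma vertex3 {a : ℝ} (h1 : -1 < a) (h2 : a < 1) : MI a 1 a = 0 := by
  have ha1 : (1:ℝ) + a ≠ 0 := by linarith
  have ha2 : (1:ℝ) - a ≠ 0 := by linarith
  simp only [MI, p00, p01, p10, p11, pX0, pX1, pY0, pY1]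
  rw [show (1 + a - 1 - a)/4 = (0:ℝ) by ring,
      show (1 - a - 1 + a)/4 = (0:ℝ) by ring,
      show (1 + a + 1 + a)/4 / ((1+a)/2 * ((1+1)/2)) = (1:ℝ) by field_simp; ring,
      show (1 - a + 1 - a)/4 / ((1-a)/2 * ((1+1)/2)) = (1:ℝ) by field_simp; ring]
  simp

lemma hardFOUR {x y d : ℝ} (hy : 0 ≤ y) (hxy : y ≤ x) (hd : 0 ≤ d) :
    x * Real.log x + (y+d) * Real.log (y+d) ≤ (x+d) * Real.log (x+d) + y * Real.log y := by
  rcases eq_or_lt_of_le (show (0:ℝ) ≤ x by linarith) with hx | hx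
  · have hy0 : y = 0 := by linarith
    rw [← hx, hy0]; simp
  rcases eq_or_lt_of_le (show (0:ℝ) ≤ y + d by linarith) with hyd | hyd
  · have hd0 : d = 0 := by linarith
    have hy0 : y = 0 := by linarith
    rw [hd0, hy0]; simp
  rcases eq_or_lt_of_le (show (0:ℝ) ≤ x - y + d by linarith) with hS | hS
  · have hxy' : x = y := by linarith
    have hd0 : d = 0 := by linarith
    rw [hxy', hd0]; simp
  have i1 := tangentL (show (0:ℝ) ≤ x + d by linarith) hx
  have i2 := tangentL hy hx
  have i3 := tangentL (show (0:ℝ) ≤ x + d by linarith) hyd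
  have i4 := tangentL hy hyd
  have j1 := mul_le_mul_of_nonneg_left i1 (show (0:ℝ) ≤ x - y by linarith)
  have j2 := mul_le_mul_of_nonneg_left i2 hd
  have j3 := mul_le_mul_of_nonneg_left i3 hd
  have j4 := mul_le_mul_of_nonneg_left i4 (show (0:ℝ) ≤ x - y by linarith)
  have final : (x-y+d) * (x*Real.log x + (y+d)*Real.log (y+d))
      ≤ (x-y+d) * ((x+d)*Real.log (x+d) + y*Real.log y) := by nlinarith [j1, j2, j3, j4]
  exact le_of_mul_le_mul_left final hS

lemma fV1 {a c : ℝ} (ha : 0 ≤ a) (hac : a ≤ c) (hc : c ≤ 1) : Feas a (c+a-1) c := by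
  refine ⟨?_, ?_, ?_, ?_⟩ <;> simp only [p00, p01, p10, p11] <;> linarith

lemma fV2 {a c : ℝ} (ha : 0 ≤ a) (hac : a ≤ c) (hc : c ≤ 1) : Feas a (1+a-c) c := by
  refine ⟨?_, ?_, ?_, ?_⟩ <;> simp only [p00, p01, p10, p11] <;> linarith

lemma fV3 {a : ℝ} (ha : 0 ≤ a) (ha1 : a ≤ 1) : Feas a 1 a := by
  refine ⟨?_, ?_, ?_, ?_⟩ <;> simp only [p00, p01, p10, p11] <;> linarith

lemma vertex2_le {a c : ℝ} (ha : 0 ≤ a) (hac : a ≤ c) (hc : c ≤ 1) :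
    MI a (1+a-c) c ≤ MI a (c+a-1) c := by
  rcases eq_or_lt_of_le hc with hc1 | hc1
  · rw [hc1]
  rcases eq_or_lt_of_le hac with he | he
  · subst he
    rw [show (1:ℝ)+a-a = 1 by ring, vertex3 (by linarith : (-1:ℝ) < a) hc1]
    exact MI_nonneg (fV1 ha (le_refl a) hc)
  -- generic case 0 ≤ a < c < 1
  have hx : (0:ℝ) < (1+a)/2 := by linarith
  have hy : (0:ℝ) < (1-a)/2 := by linarith
  have hd : (0:ℝ) < (1-c)/2 := by linarith
  have hw : (0:ℝ) < (a+c)/2 := by linarith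
  have hu : (0:ℝ) < (2-a-c)/2 := by linarith
  have hv : (0:ℝ) < (2+a-c)/2 := by linarith
  have hz : (0:ℝ) < (c-a)/2 := by linarith
  have E1 : MI a (c+a-1) c
      = -((a+c)/2 * Real.log ((1+a)/2)) + (1-c)/2 * Real.log ((1-c)/2)
        - (1-c)/2 * Real.log ((1+a)/2) - (1-c)/2 * Real.log ((2-a-c)/2)
        - (1-a)/2 * Real.log ((2-a-c)/2) := by
    simp only [MI, p00, p01, p10, p11, pX0, pX1, pY0, pY1]
    rw [show (1 + a + (c+a-1) + c)/4 = (a+c)/2 by ring,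
        show (1 + a - (c+a-1) - c)/4 = (1-c)/2 by ring,
        show (1 - a + (c+a-1) - c)/4 = (0:ℝ) by ring,
        show (1 - a - (c+a-1) + c)/4 = (1-a)/2 by ring,
        show (1 + (c+a-1))/2 = (a+c)/2 by ring,
        show (1 - (c+a-1))/2 = (2-a-c)/2 by ring]
    rw [Real.log_div (ne_of_gt hw) (by positivity),
        Real.log_mul (ne_of_gt hx) (ne_of_gt hw),
        Real.log_div (ne_of_gt hd) (by positivity),
        Real.log_mul (ne_of_gt hx) (ne_of_gt hu),
        Real.log_div (ne_of_gt hy) (by positivity),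
        Real.log_mul (ne_of_gt hy) (ne_of_gt hu)]
    ring
  have E2 : MI a (1+a-c) c
      = -((1+a)/2 * Real.log ((2+a-c)/2)) + (1-c)/2 * Real.log ((1-c)/2)
        - (1-c)/2 * Real.log ((1-a)/2) - (1-c)/2 * Real.log ((2+a-c)/2)
        - (c-a)/2 * Real.log ((1-a)/2) := by
    simp only [MI, p00, p01, p10, p11, pX0, pX1, pY0, pY1]
    rw [show (1 + a + (1+a-c) + c)/4 = (1+a)/2 by ring,
        show (1 + a - (1+a-c) - c)/4 = (0:ℝ) by ring,
        show (1 - a + (1+a-c) - c)/4 = (1-c)/2 by ring,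
        show (1 - a - (1+a-c) + c)/4 = (c-a)/2 by ring,
        show (1 + (1+a-c))/2 = (2+a-c)/2 by ring,
        show (1 - (1+a-c))/2 = (c-a)/2 by ring]
    rw [Real.log_div (ne_of_gt hx) (by positivity),
        Real.log_mul (ne_of_gt hx) (ne_of_gt hv),
        Real.log_div (ne_of_gt hd) (by positivity),
        Real.log_mul (ne_of_gt hy) (ne_of_gt hv),
        Real.log_div (ne_of_gt hz) (by positivity),
        Real.log_mul (ne_of_gt hy) (ne_of_gt hz)]
    ring
  have F := hardFOUR (le_of_lt hy) (show (1-a)/2 ≤ (1+a)/2 by linarith) (le_of_lt hd)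
  rw [show (1-a)/2 + (1-c)/2 = (2-a-c)/2 by ring,
      show (1+a)/2 + (1-c)/2 = (2+a-c)/2 by ring] at F
  rw [E1, E2]
  linarith [F]


/-! ### Edge lemmas -/

lemma top {a c b : ℝ} (ha : 0 ≤ a) (hac : a ≤ c) (hc : c ≤ 1) (f : Feas a b c) :
    MI a b c ≤ MI a (c+a-1) c := by
  have f2 := f.2.1
  have f3 := f.2.2.1
  simp only [p01] at f2
  simp only [p10] at f3
  have hb1 : c + a - 1 ≤ b := by linarith
  have hb2 : b ≤ 1 + a - c := by linarith
  rcases eq_or_lt_of_le hc with hc1 | hc1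
  · have hbe : b = c + a - 1 := by linarith
    rw [hbe]
  · have h2c : (0:ℝ) < 2*(1-c) := by linarith
    have ht0 : 0 ≤ (1 + a - c - b) / (2*(1-c)) := by
      apply div_nonneg <;> linarith
    have ht1 : (1 + a - c - b) / (2*(1-c)) ≤ 1 := by
      rw [div_le_one h2c]; linarith
    have hs := seg ht0 ht1 (fV1 ha hac hc) (fV2 ha hac hc)
    have eb : (1 + a - c - b) / (2*(1-c))*(c+a-1)
        + (1-(1 + a - c - b) / (2*(1-c)))*(1+a-c) = b := by
      field_simp; ring
    have el : (1 + a - c - b) / (2*(1-c))*c + (1-(1 + a - c - b) / (2*(1-c)))*c = c := by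
      ring
    rw [eb, el] at hs
    have h2 := vertex2_le ha hac hc
    have hprod : 0 ≤ (1-(1 + a - c - b) / (2*(1-c))) * (MI a (c+a-1) c - MI a (1+a-c) c) :=
      mul_nonneg (by linarith) (by linarith)
    nlinarith [hs, hprod]

lemma e01edge {a c b lam : ℝ} (ha : 0 ≤ a) (hac : a ≤ c) (hc : c ≤ 1)
    (f : Feas a b lam) (hp : p01 a b lam = 0) (hl : lam ≤ c) :
    MI a b lam ≤ MI a (c+a-1) c := by
  have f4 := f.2.2.2
  simp only [p11] at f4
  simp only [p01] at hp
  have hb : b = 1 + a - lam := by linarith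
  have hla : a ≤ lam := by linarith
  rcases eq_or_lt_of_le hac with he | he
  · have hlc : lam = c := by linarith
    have hb' : b = 1 + a - c := by rw [hb, hlc]
    rw [hb', hlc]
    exact vertex2_le ha hac hc
  · have hca : (0:ℝ) < c - a := by linarith
    have hs0 : 0 ≤ 1 - (lam - a)/(c - a) := by
      have : (lam - a)/(c - a) ≤ 1 := by rw [div_le_one hca]; linarith
      linarith
    have hs1 : 1 - (lam - a)/(c - a) ≤ 1 := by
      have : 0 ≤ (lam - a)/(c - a) := div_nonneg (by linarith) (le_of_lt hca)
      linarith
    have ha1 : a ≤ 1 := by linarith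
    have hseg := seg hs0 hs1 (fV3 ha ha1) (fV2 ha hac hc)
    have eb : (1 - (lam - a)/(c - a))*1 + (1-(1 - (lam - a)/(c - a)))*(1+a-c) = b := by
      rw [hb]; field_simp; ring
    have el : (1 - (lam - a)/(c - a))*a + (1-(1 - (lam - a)/(c - a)))*c = lam := by
      field_simp; ring
    rw [eb, el] at hseg
    rw [vertex3 (by linarith : (-1:ℝ) < a) (by linarith : a < 1)] at hseg
    have h2 := vertex2_le ha hac hc
    have hM0 : 0 ≤ MI a (c+a-1) c := MI_nonneg (fV1 ha hac hc)
    have q1 : 0 ≤ (1-(1 - (lam - a)/(c - a))) * (MI a (c+a-1) c - MI a (1+a-c) c) :=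
      mul_nonneg (by linarith) (by linarith)
    have q2 : 0 ≤ (1 - (lam - a)/(c - a)) * MI a (c+a-1) c :=
      mul_nonneg hs0 hM0
    nlinarith [hseg, q1, q2]

theorem information_guessing_tradeoff (astar P : ℝ) (ha : 0 ≤ astar)
    (hP : (1 + astar) / 2 ≤ P) (hP' : P ≤ 1) :
    ∀ b lam : ℝ,
      0 ≤ p00 astar b lam → 0 ≤ p01 astar b lam →
      0 ≤ p10 astar b lam → 0 ≤ p11 astar b lam →
      (1 + max |astar| |lam|) / 2 ≤ P →
      MI astar b lam ≤ MI astar ((2 * P - 1) + astar - 1) (2 * P - 1) := by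
  intro b lam h00 h01 h10 h11 hg
  set c := 2 * P - 1 with hcdef
  have f : Feas astar b lam := ⟨h00, h01, h10, h11⟩
  have q00 : 0 ≤ 1 + astar + b + lam := by have := h00; simp only [p00] at this; linarith
  have q01 : 0 ≤ 1 + astar - b - lam := by have := h01; simp only [p01] at this; linarith
  have q10 : 0 ≤ 1 - astar + b - lam := by have := h10; simp only [p10] at this; linarith
  have q11 : 0 ≤ 1 - astar - b + lam := by have := h11; simp only [p11] at this; linarith
  have hac : astar ≤ c := by linarith
  have hc1 : c ≤ 1 := by linarith
  have hmaxc : max |astar| |lam| ≤ c := by linarith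
  have habs : |lam| ≤ c := le_trans (le_max_right _ _) hmaxc
  have hlc : lam ≤ c := le_trans (le_abs_self _) habs
  have hlc' : -c ≤ lam := neg_le_of_abs_le habs
  set Du := min (c - lam) ((1 + astar - b - lam)/2) with hDu
  set Dd := min (lam + c) ((1 + astar + b + lam)/2) with hDd
  have hDu0 : 0 ≤ Du := le_min (by linarith) (by linarith)
  have hDd0 : 0 ≤ Dd := le_min (by linarith) (by linarith)
  have hDu1 : Du ≤ c - lam := min_le_left _ _
  have hDu2 : Du ≤ (1 + astar - b - lam)/2 := min_le_right _ _
  have hDd1 : Dd ≤ lam + c := min_le_left _ _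
  have hDd2 : Dd ≤ (1 + astar + b + lam)/2 := min_le_right _ _
  -- feasibility of up point
  have fU : Feas astar (b + Du) (lam + Du) := by
    refine ⟨?_, ?_, ?_, ?_⟩ <;> simp only [p00, p01, p10, p11] <;> linarith
  -- feasibility of reflected down point
  have fW : Feas astar (-(b - Dd)) (-(lam - Dd)) := by
    refine ⟨?_, ?_, ?_, ?_⟩ <;> simp only [p00, p01, p10, p11] <;> linarith
  have claimU : MI astar (b + Du) (lam + Du) ≤ MI astar (c+astar-1) c := by
    rcases le_total (c - lam) ((1 + astar - b - lam)/2) with hm | hm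
    · have hDuv : Du = c - lam := min_eq_left hm
      have e : lam + Du = c := by rw [hDuv]; ring
      rw [e]
      rw [e] at fU
      exact top ha hac hc1 fU
    · have hDuv : Du = (1 + astar - b - lam)/2 := min_eq_right hm
      apply e01edge ha hac hc1 fU
      · simp only [p01]; rw [hDuv]; ring
      · rw [hDuv]; linarith
  have claimW : MI astar (b - Dd) (lam - Dd) ≤ MI astar (c+astar-1) c := by
    rw [← MI_neg astar (b - Dd) (lam - Dd)]
    rcases le_total (lam + c) ((1 + astar + b + lam)/2) with hm | hm
    · have hDdv : Dd = lam + c := min_eq_left hm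
      have e : -(lam - Dd) = c := by rw [hDdv]; ring
      rw [e]
      rw [e] at fW
      exact top ha hac hc1 fW
    · have hDdv : Dd = (1 + astar + b + lam)/2 := min_eq_right hm
      apply e01edge ha hac hc1 fW
      · simp only [p01]; rw [hDdv]; ring
      · rw [hDdv]; linarith
  rcases eq_or_lt_of_le hDu0 with hU0 | hUpos
  · have e := claimU
    rw [← hU0, add_zero, add_zero] at e
    exact e
  rcases eq_or_lt_of_le hDd0 with hD0 | hDpos
  · have e := claimW
    rw [← hD0, sub_zero, sub_zero] at e
    exact e
  have hS : (0:ℝ) < Du + Dd := by linarith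
  have ht0 : 0 ≤ Dd / (Du + Dd) := div_nonneg (le_of_lt hDpos) (le_of_lt hS)
  have ht1 : Dd / (Du + Dd) ≤ 1 := by rw [div_le_one hS]; linarith
  have fW' : Feas astar (b - Dd) (lam - Dd) := by
    refine ⟨?_, ?_, ?_, ?_⟩ <;> simp only [p00, p01, p10, p11] <;> linarith
  have hseg := seg ht0 ht1 fU fW'
  have eb : Dd / (Du + Dd) * (b + Du) + (1 - Dd / (Du + Dd)) * (b - Dd) = b := by
    field_simp; ring
  have el : Dd / (Du + Dd) * (lam + Du) + (1 - Dd / (Du + Dd)) * (lam - Dd) = lam := by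
    field_simp; ring
  rw [eb, el] at hseg
  have q1 : 0 ≤ Dd / (Du + Dd) * (MI astar (c+astar-1) c - MI astar (b + Du) (lam + Du)) :=
    mul_nonneg ht0 (by linarith)
  have q2 : 0 ≤ (1 - Dd / (Du + Dd)) * (MI astar (c+astar-1) c - MI astar (b - Dd) (lam - Dd)) :=
    mul_nonneg (by linarith) (by linarith)
  nlinarith [hseg, q1, q2]
end
end
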